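/- arXiv:1006.2666 — 6 statements merged into one kernel-verified Lean document; each statement's English description precedes it below -/
import Mathlib

section
/- Let X and Y be Banach spaces and T : X → Y a bounded linear operator. If there exists a bounded sequence (x_t) indexed by the Cantor tree 2^{<ω} in X such that for every branch σ ∈ 2^ℕ the sequence (T(x_{σ|n})) converges weak* in Y** to an element of Y** \ Y, and for every infinite antichain A of 2^{<ω} the sequence (T(x_t))_{t∈A} is weakly null, then the range of the dual operator T* : Y* → X* is not norm-separable. -/
/-!
Rescaling a coordinate of the nonzero weak* limit along a branch `σ` gives `f_σ ∈ Y*` with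
`f_σ (T x_{σ|n}) → 1`. If `T*(Y*)` were separable, a countable dense subset would put infinitely
many of the uncountably many `T* f_σ` into one `ε`-ball. Infinitely many branches contain a
sequence `ρ_k` leaving an accumulation point at strictly increasing levels, so nodes `t_k` far
enough along `ρ_k` form an antichain with `f_{ρ_k} (T x_{t_k}) > 1/2`. As
`‖T* f_{ρ_0} - T* f_{ρ_k}‖ < 2ε` and `x` is bounded, `f_{ρ_0} (T x_{t_k}) > 1/4` for all `k`,
contradicting weak nullity along the antichain.
-/

open Filter Topology NormedSpace

/-- Initial segment `σ|n` of a branch `σ ∈ 2^ℕ`. -/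
def seg (σ : ℕ → Bool) (n : ℕ) : List Bool := List.ofFn (fun i : Fin n => σ i)

/-- Two nodes of the Cantor tree `2^{<ω}` are incomparable. -/
def Incomp (s t : List Bool) : Prop := ¬ s <+: t ∧ ¬ t <+: s

open PiNat

lemma Incomp.symm {s t : List Bool} (h : Incomp s t) : Incomp t s := ⟨h.2, h.1⟩

lemma incomp_seg_of_apply_ne {σ σ' : ℕ → Bool} {p m m' : ℕ} (hp : σ p ≠ σ' p)
    (hm : p < m) (hm' : p < m') : Incomp (seg σ m) (seg σ' m') := by
  have not_prefix : ∀ {σ σ' : ℕ → Bool} {m m' : ℕ}, σ p ≠ σ' p → p < m → p < m' →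
      ¬ seg σ m <+: seg σ' m' := fun hp hm hm' hpre => hp <| by
    simpa [seg] using hpre.getElem (by simpa [seg] using hm)
  exact ⟨not_prefix hp hm hm', not_prefix hp.symm hm' hm⟩

lemma injective_of_pairwise_incomp {ι : Type*} {t : ι → List Bool}
    (h : Pairwise fun i j => Incomp (t i) (t j)) : Function.Injective t :=
  fun _ _ hij => by_contra fun hne => (h hne).1 (hij ▸ List.prefix_refl _)

instance : Uncountable (ℕ → Bool) :=
  Cardinal.aleph0_lt_mk_iff.mp (by simpa using Cardinal.cantor Cardinal.aleph0)

theorem Set.Infinite.exists_seq_pairwise_incomp_seg {S : Set (ℕ → Bool)} (hS : S.Infinite) :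
    ∃ ρ : ℕ → ℕ → Bool, (∀ k, ρ k ∈ S) ∧ ∃ ℓ : ℕ → ℕ, ∀ m : ℕ → ℕ, (∀ k, ℓ k < m k) →
      Pairwise fun i j => Incomp (seg (ρ i) (m i)) (seg (ρ j) (m j)) := by
  obtain ⟨τ, hτ⟩ := hS.exists_accPt_principal
  have hnear : ∀ n, ∃ σ ∈ S, σ ≠ τ ∧ σ ∈ cylinder τ n := fun n => by
    obtain ⟨σ, ⟨hσn, hσS⟩, hστ⟩ := accPt_iff_nhds.1 hτ _
      ((isOpen_cylinder _ τ n).mem_nhds (self_mem_cylinder τ n))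
    exact ⟨σ, hσS, hστ, hσn⟩
  choose σ hσS hστ hσn using hnear
  obtain ⟨φ, -, hφ⟩ := strictMono_subseq_of_id_le fun n =>
    (mem_cylinder_iff_le_firstDiff (hστ n) n).1 (hσn n)
  refine ⟨σ ∘ φ, fun k => hσS _, fun k => firstDiff (σ (φ k)) τ, fun m hm => ?_⟩
  -- `σ (φ j)` agrees with `τ` beyond the point where `σ (φ i)` leaves it
  have hsplit : ∀ {i j}, i < j → Incomp (seg (σ (φ i)) (m i)) (seg (σ (φ j)) (m j)) := by
    intro i j hij
    have hne : σ (φ i) (firstDiff (σ (φ i)) τ) ≠ σ (φ j) (firstDiff (σ (φ i)) τ) := by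
      have hlt : firstDiff (σ (φ i)) τ < firstDiff (σ (φ j)) τ := hφ hij
      rw [apply_eq_of_lt_firstDiff hlt]
      exact apply_firstDiff_ne (hστ _)
    exact incomp_seg_of_apply_ne hne (hm i) ((hφ hij).trans (hm j))
  intro i j hij
  rcases hij.lt_or_gt with h | h
  exacts [hsplit h, (hsplit h).symm]

theorem TopologicalSpace.IsSeparable.exists_infinite_preimage_ball {α E : Type*} [Uncountable α]
    [PseudoMetricSpace E] {s : Set E} (hs : IsSeparable s) {f : α → E} (hf : ∀ a, f a ∈ s)
    {ε : ℝ} (hε : 0 < ε) : ∃ g, (f ⁻¹' Metric.ball g ε).Infinite := by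
  obtain ⟨c, hc, hsc⟩ := hs
  by_contra! hfin
  refine Set.not_countable_univ ((hc.biUnion fun g _ => (hfin g).countable).mono fun a _ => ?_)
  obtain ⟨g, hg, hd⟩ := Metric.mem_closure_iff.1 (hsc (hf a)) ε hε
  exact Set.mem_biUnion hg (by simpa [dist_comm] using hd)

theorem exists_tendsto_one_of_tendsto_ne_zero {𝕜 E : Type*} [NontriviallyNormedField 𝕜]
    [NormedAddCommGroup E] [NormedSpace 𝕜 E] {z : ℕ → E} {y : StrongDual 𝕜 (StrongDual 𝕜 E)}
    (hy : y ≠ 0) (hz : ∀ f : StrongDual 𝕜 E, Tendsto (fun n => f (z n)) atTop (𝓝 (y f))) :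
    ∃ f : StrongDual 𝕜 E, Tendsto (fun n => f (z n)) atTop (𝓝 1) := by
  obtain ⟨f, hf⟩ := DFunLike.ne_iff.1 hy
  refine ⟨(y f)⁻¹ • f, ?_⟩
  simpa [inv_mul_cancel₀ hf] using (hz f).const_mul (y f)⁻¹

lemma abs_apply_sub_apply_le_of_mem_ball {E : Type*} [SeminormedAddCommGroup E]
    [NormedSpace ℝ E] {φ ψ g : StrongDual ℝ E} {ε C : ℝ} (hφ : φ ∈ Metric.ball g ε)
    (hψ : ψ ∈ Metric.ball g ε) {v : E} (hv : ‖v‖ ≤ C) : |φ v - ψ v| ≤ 2 * ε * C :=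
  calc |φ v - ψ v| = ‖(φ - ψ) v‖ := by simp [Real.norm_eq_abs]
    _ ≤ ‖φ - ψ‖ * ‖v‖ := (φ - ψ).le_opNorm v
    _ ≤ 2 * ε * C := by
      have hd : dist φ ψ ≤ ε + ε := (dist_triangle_right _ _ g).trans (add_le_add hφ.le hψ.le)
      rw [← dist_eq_norm, two_mul]
      exact mul_le_mul hd hv (norm_nonneg v) (dist_nonneg.trans hd)

theorem dual_range_not_separable_general
    {X Y : Type*} [NormedAddCommGroup X] [NormedSpace ℝ X]
    [NormedAddCommGroup Y] [NormedSpace ℝ Y]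
    (T : X →L[ℝ] Y) (x : List Bool → X)
    (hbdd : ∃ C : ℝ, ∀ t, ‖x t‖ ≤ C)
    (hbranch : ∀ σ : ℕ → Bool, ∃ y : StrongDual ℝ (StrongDual ℝ Y),
      y ∉ Set.range (inclusionInDoubleDual ℝ Y) ∧
      ∀ f : StrongDual ℝ Y, Tendsto (fun n => f (T (x (seg σ n)))) atTop (𝓝 (y f)))
    (hanti : ∀ t : ℕ → List Bool, Function.Injective t →
      (Pairwise fun i j => Incomp (t i) (t j)) →
      ∀ f : StrongDual ℝ Y, Tendsto (fun n => f (T (x (t n)))) atTop (𝓝 0)) :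
    ¬ TopologicalSpace.IsSeparable
      {g : StrongDual ℝ X | ∃ f : StrongDual ℝ Y, g = f.comp T} := by
  intro hsep
  obtain ⟨C, hC⟩ := hbdd
  have hC0 : 0 ≤ C := (norm_nonneg _).trans (hC [])
  have hF : ∀ σ, ∃ f : StrongDual ℝ Y, Tendsto (fun n => f (T (x (seg σ n)))) atTop (𝓝 1) :=
    fun σ => by
      obtain ⟨y, hy, hlim⟩ := hbranch σ
      exact exists_tendsto_one_of_tendsto_ne_zero (fun h => hy ⟨0, by simp [h]⟩) hlim
  choose F hF using hF
  set ε : ℝ := 1 / (8 * (C + 1))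
  obtain ⟨g, hg⟩ := hsep.exists_infinite_preimage_ball (f := fun σ => (F σ).comp T)
    (fun σ => ⟨F σ, rfl⟩) (ε := ε) (by positivity)
  obtain ⟨ρ, hρg, ℓ, hℓ⟩ := hg.exists_seq_pairwise_incomp_seg
  have hm : ∀ k, ∃ m, ℓ k < m ∧ 1 / 2 < F (ρ k) (T (x (seg (ρ k) m))) := fun k =>
    ((eventually_gt_atTop (ℓ k)).and
      ((hF (ρ k)).eventually (eventually_gt_nhds (by norm_num)))).exists
  choose m hℓm hmF using hm
  set t : ℕ → List Bool := fun k => seg (ρ k) (m k)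
  have ht : Pairwise fun i j => Incomp (t i) (t j) := hℓ m hℓm
  have hε : 2 * ε * C ≤ 1 / 4 := by
    simp only [ε]
    field_simp
    linarith
  have hclose : ∀ k, |F (ρ 0) (T (x (t k))) - F (ρ k) (T (x (t k)))| ≤ 1 / 4 := fun k =>
    (abs_apply_sub_apply_le_of_mem_ball (hρg 0) (hρg k) (hC _)).trans hε
  obtain ⟨k, hk⟩ := ((hanti t (injective_of_pairwise_incomp ht) ht (F (ρ 0))).eventually
    (eventually_lt_nhds (by norm_num : (0 : ℝ) < 1 / 4))).exists
  linarith [hmF k, (abs_le.1 (hclose k)).1]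

/-- If a bounded sequence `(x_t)_{t ∈ 2^{<ω}}` in `X` is such that along every branch the
images `(T x_{σ|n})` converge weak* in `Y**` to an element outside `Y`, and along every
infinite antichain the images are weakly null, then the range of the dual operator
`T* : Y* → X*` is not norm-separable. -/
theorem dual_range_not_separable
    {X Y : Type*} [NormedAddCommGroup X] [NormedSpace ℝ X] [CompleteSpace X]
    [NormedAddCommGroup Y] [NormedSpace ℝ Y] [CompleteSpace Y]
    (T : X →L[ℝ] Y) (x : List Bool → X)
    (hbdd : ∃ C : ℝ, ∀ t, ‖x t‖ ≤ C)
    (hbranch : ∀ σ : ℕ → Bool, ∃ y : StrongDual ℝ (StrongDual ℝ Y),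
      y ∉ Set.range (inclusionInDoubleDual ℝ Y) ∧
      ∀ f : StrongDual ℝ Y, Tendsto (fun n => f (T (x (seg σ n)))) atTop (𝓝 (y f)))
    (hanti : ∀ t : ℕ → List Bool, Function.Injective t →
      (Pairwise fun i j => Incomp (t i) (t j)) →
      ∀ f : StrongDual ℝ Y, Tendsto (fun n => f (T (x (t n)))) atTop (𝓝 0)) :
    ¬ TopologicalSpace.IsSeparable
      {g : StrongDual ℝ X | ∃ f : StrongDual ℝ Y, g = f.comp T} :=
  dual_range_not_separable_general T x hbdd hbranch hanti
end

section
/- Let S be a countably infinite set and let 𝒜 ⊆ [S]^∞ be a hereditary family. Then 𝒜 is an M-family if and only if for every sequence (A_n) of elements of 𝒜 there exists A ∈ 𝒜 such that A ∩ A_n ≠ ∅ for infinitely many n. -/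
/-!
Only the converse needs an idea. Fix an injection `e : α → ℕ` and shrink each `A n` to
`{x ∈ A n | n ≤ e x}`, still a member of `𝒜`. If `B ∈ 𝒜` meets infinitely many of the shrunken
sets, pick one point of `B` from each: a point picked at index `n` has `e x ≥ n`, so infinitely
many distinct points are picked, and only those picked at indices `n < k` can miss
`⋃_{n ≥ k} A n`.
-/

/-- A hereditary family `𝒜` of infinite subsets is an M-family if for every sequence `(A_n)`
in `𝒜` there is `A ∈ 𝒜` all but finitely many of whose elements lie in `⋃_{n ≥ k} A_n`
for every `k`. -/
def MFamily {α : Type*} (𝒜 : Set (Set α)) : Prop :=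
  ∀ A : ℕ → Set α, (∀ n, A n ∈ 𝒜) →
    ∃ B ∈ 𝒜, ∀ k : ℕ, (B \ ⋃ n, ⋃ (_ : k ≤ n), A n).Finite

open Set

theorem Set.Infinite.infinite_setOf_inter_nonempty {α : Type*} {A : ℕ → Set α} {B : Set α}
    (hB : B.Infinite) (hfin : ∀ k, (B \ ⋃ n, ⋃ (_ : k ≤ n), A n).Finite) :
    {n | (B ∩ A n).Nonempty}.Infinite := by
  intro hI
  obtain ⟨m, hm⟩ := hI.bddAbove
  refine hB ((hfin (m + 1)).subset fun x hx => ⟨hx, ?_⟩)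
  simp only [mem_iUnion]
  rintro ⟨n, hmn, hxn⟩
  have : n ≤ m := hm ⟨x, hx, hxn⟩
  omega

theorem Set.Infinite.sep_le_of_injective {α : Type*} {s : Set α} (hs : s.Infinite) {e : α → ℕ}
    (he : Function.Injective e) (n : ℕ) : {x ∈ s | n ≤ e x}.Infinite := by
  refine (hs.sdiff ((finite_Iio n).preimage he.injOn)).mono fun x hx => ⟨hx.1, ?_⟩
  simpa using hx.2

theorem exists_infinite_subset_finite_diff_iUnion_ge {α : Type*} (e : α → ℕ) {A : ℕ → Set α}
    {B : Set α} (hI : {n | (B ∩ {x ∈ A n | n ≤ e x}).Nonempty}.Infinite) :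
    ∃ B' ⊆ B, B'.Infinite ∧ ∀ k, (B' \ ⋃ n, ⋃ (_ : k ≤ n), A n).Finite := by
  set I := {n | (B ∩ {x ∈ A n | n ≤ e x}).Nonempty}
  let b : I → α := fun n => n.2.some
  have hb : ∀ n : I, b n ∈ B ∧ b n ∈ A n ∧ (n : ℕ) ≤ e (b n) := fun n => n.2.some_mem
  refine ⟨range b, range_subset_iff.2 fun n => (hb n).1, fun hfin => ?_, fun k => ?_⟩
  · obtain ⟨m, hm⟩ := (hfin.image e).bddAbove
    obtain ⟨n, hn, hmn⟩ := hI.exists_gt m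
    have : e (b ⟨n, hn⟩) ≤ m := hm ⟨_, mem_range_self _, rfl⟩
    have : n ≤ e (b ⟨n, hn⟩) := (hb ⟨n, hn⟩).2.2
    omega
  · have hsmall : {n : I | (n : ℕ) < k}.Finite :=
      (finite_Iio k).preimage Subtype.val_injective.injOn
    refine (hsmall.image b).subset ?_
    rintro _ ⟨⟨n, rfl⟩, hx⟩
    refine ⟨n, show (n : ℕ) < k from lt_of_not_ge fun hkn => hx ?_, rfl⟩
    exact mem_iUnion₂.2 ⟨n, hkn, (hb n).2.1⟩

theorem mFamily_iff_meets_infinitely_many_general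
    {α : Type*} [Countable α] (𝒜 : Set (Set α))
    (hinf : ∀ A ∈ 𝒜, A.Infinite)
    (hher : ∀ A ∈ 𝒜, ∀ A' ⊆ A, A'.Infinite → A' ∈ 𝒜) :
    MFamily 𝒜 ↔
      ∀ A : ℕ → Set α, (∀ n, A n ∈ 𝒜) →
        ∃ B ∈ 𝒜, {n : ℕ | (B ∩ A n).Nonempty}.Infinite := by
  refine ⟨fun h A hA => ?_, fun h A hA => ?_⟩
  · obtain ⟨B, hB, hfin⟩ := h A hA
    exact ⟨B, hB, (hinf B hB).infinite_setOf_inter_nonempty hfin⟩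
  · obtain ⟨e, he⟩ := Countable.exists_injective_nat α
    have hC : ∀ n, {x ∈ A n | n ≤ e x} ∈ 𝒜 := fun n =>
      hher _ (hA n) _ (sep_subset _ _) ((hinf _ (hA n)).sep_le_of_injective he n)
    obtain ⟨B, hB, hI⟩ := h _ hC
    obtain ⟨B', hB'B, hB'inf, hB'fin⟩ := exists_infinite_subset_finite_diff_iUnion_ge e hI
    exact ⟨B', hher B hB B' hB'B hB'inf, hB'fin⟩

/-- A hereditary family of infinite subsets of a countably infinite set is an M-family iff
for every sequence `(A_n)` in the family there is a member meeting infinitely many `A_n`. -/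
theorem mFamily_iff_meets_infinitely_many
    {α : Type*} [Countable α] [Infinite α] (𝒜 : Set (Set α))
    (hinf : ∀ A ∈ 𝒜, A.Infinite)
    (hher : ∀ A ∈ 𝒜, ∀ A' ⊆ A, A'.Infinite → A' ∈ 𝒜) :
    MFamily 𝒜 ↔
      ∀ A : ℕ → Set α, (∀ n, A n ∈ 𝒜) →
        ∃ B ∈ 𝒜, {n : ℕ | (B ∩ A n).Nonempty}.Infinite :=
  mFamily_iff_meets_infinitely_many_general 𝒜 hinf hher
end

section
/- Let S be a countably infinite set and let 𝒜, ℬ ⊆ [S]^∞ be hereditary and orthogonal families (A ∩ B is finite for all A ∈ 𝒜, B ∈ ℬ). If there exists a perfect Lusin gap inside (𝒜, ℬ), then 𝒜 is not countably generated in ℬ^⊥. -/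
/-!
If every `A_σ` is almost contained in `C_{n(σ)}` and every `B_σ` is almost disjoint from it, then
`σ ↦ (n(σ), A_σ \ C_{n(σ)}, B_σ ∩ C_{n(σ)})` takes values in a countable set. Two indices with the
same value cannot be distinct: a point of `A_σ ∩ B_τ` would lie in `A_τ ∩ B_τ` if it is outside
`C_n`, and in `A_σ ∩ B_σ` if it is inside. So a Lusin-type family separated by countably many sets
is countable, while a perfect Lusin gap is indexed by the uncountable set `2^ℕ`.
-/

open Set

section

variable {α ι : Type*}

theorem Set.disjoint_of_sdiff_eq_of_inter_eq {A A' B B' C : Set α} (hAB : Disjoint A B)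
    (hAB' : Disjoint A' B') (hsdiff : A \ C = A' \ C) (hinter : B ∩ C = B' ∩ C) :
    Disjoint A B' := by
  rw [disjoint_left]
  intro x hxA hxB'
  by_cases hxC : x ∈ C
  · have hxB : x ∈ B ∩ C := hinter ▸ ⟨hxB', hxC⟩
    exact disjoint_left.1 hAB hxA hxB.1
  · have hxA' : x ∈ A' \ C := hsdiff ▸ ⟨hxA, hxC⟩
    exact disjoint_left.1 hAB' hxA'.1 hxB'

theorem countable_of_countably_separated [Countable α] {A B : ι → Set α}
    (hdisj : ∀ i, Disjoint (A i) (B i))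
    (hcross : ∀ i j, i ≠ j → ¬(Disjoint (A i) (B j) ∧ Disjoint (A j) (B i)))
    (C : ℕ → Set α) (hA : ∀ i, ∃ n, (A i \ C n).Finite) (hB : ∀ i n, (B i ∩ C n).Finite) :
    Countable ι := by
  choose n hn using hA
  refine Function.Injective.countable
    (f := fun i => (n i, (hn i).toFinset, (hB i (n i)).toFinset)) fun i j hij => ?_
  simp only [Prod.mk.injEq, Finite.toFinset_inj] at hij
  obtain ⟨hnij, hsdiff, hinter⟩ := hij
  rw [hnij] at hsdiff hinter
  by_contra hne
  exact hcross i j hne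
    ⟨disjoint_of_sdiff_eq_of_inter_eq (hdisj i) (hdisj j) hsdiff hinter,
      disjoint_of_sdiff_eq_of_inter_eq (hdisj j) (hdisj i) hsdiff.symm hinter.symm⟩

theorem uncountable_nat_bool : Uncountable (ℕ → Bool) := by
  rw [← Cardinal.aleph0_lt_mk_iff]
  simpa using Cardinal.cantor Cardinal.aleph0

end

theorem not_countably_generated_of_perfect_Lusin_gap_general
    {α : Type*} [Countable α] (𝒜 ℬ : Set (Set α))
    (a b : (ℕ → Bool) → α → Bool)
    (hmemA : ∀ σ, {x | a σ x = true} ∈ 𝒜) (hmemB : ∀ σ, {x | b σ x = true} ∈ ℬ)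
    (hdisj : ∀ σ x, ¬(a σ x = true ∧ b σ x = true))
    (hcross : ∀ σ τ, σ ≠ τ →
      ∃ x, (a σ x = true ∧ b τ x = true) ∨ (a τ x = true ∧ b σ x = true)) :
    ¬ ∃ C : ℕ → Set α,
        (∀ n, (C n).Infinite ∧ ∀ B ∈ ℬ, (C n ∩ B).Finite) ∧
        (∀ A ∈ 𝒜, ∃ n, (A \ C n).Finite) := by
  rintro ⟨C, hC, hgen⟩
  have hgap_disj : ∀ σ, Disjoint {x | a σ x = true} {x | b σ x = true} := fun σ =>
    disjoint_left.2 fun x hxa hxb => hdisj σ x ⟨hxa, hxb⟩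
  have hgap_cross : ∀ σ τ, σ ≠ τ → ¬(Disjoint {x | a σ x = true} {x | b τ x = true} ∧
      Disjoint {x | a τ x = true} {x | b σ x = true}) := by
    rintro σ τ hne ⟨hστ, hτσ⟩
    obtain ⟨x, ⟨hxa, hxb⟩ | ⟨hxa, hxb⟩⟩ := hcross σ τ hne
    exacts [disjoint_left.1 hστ hxa hxb, disjoint_left.1 hτσ hxa hxb]
  have hcount : Countable (ℕ → Bool) :=
    countable_of_countably_separated hgap_disj hgap_cross C (fun σ => hgen _ (hmemA σ))
      fun σ n => inter_comm (C n) _ ▸ (hC n).2 _ (hmemB σ)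
  exact uncountable_nat_bool.not_countable hcount

/-- If there is a perfect Lusin gap inside a pair `(𝒜, ℬ)` of hereditary orthogonal families
of infinite subsets of a countably infinite set, then `𝒜` is not countably generated in
`ℬ^⊥`.  The gap is given by characteristic functions `a, b : 2^ℕ → (α → Bool)`. -/
theorem not_countably_generated_of_perfect_Lusin_gap
    {α : Type*} [Countable α] [Infinite α] (𝒜 ℬ : Set (Set α))
    (hAinf : ∀ A ∈ 𝒜, A.Infinite) (hBinf : ∀ B ∈ ℬ, B.Infinite)
    (hAher : ∀ A ∈ 𝒜, ∀ A' ⊆ A, A'.Infinite → A' ∈ 𝒜)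
    (hBher : ∀ B ∈ ℬ, ∀ B' ⊆ B, B'.Infinite → B' ∈ ℬ)
    (horth : ∀ A ∈ 𝒜, ∀ B ∈ ℬ, (A ∩ B).Finite)
    (a b : (ℕ → Bool) → α → Bool)
    (hca : Continuous a) (hcb : Continuous b)
    (hinj : ∀ σ τ : ℕ → Bool, a σ = a τ → b σ = b τ → σ = τ)
    (hmemA : ∀ σ, {x | a σ x = true} ∈ 𝒜) (hmemB : ∀ σ, {x | b σ x = true} ∈ ℬ)
    (hdisj : ∀ σ x, ¬(a σ x = true ∧ b σ x = true))
    (hcross : ∀ σ τ, σ ≠ τ →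
      ∃ x, (a σ x = true ∧ b τ x = true) ∨ (a τ x = true ∧ b σ x = true)) :
    ¬ ∃ C : ℕ → Set α,
        (∀ n, (C n).Infinite ∧ ∀ B ∈ ℬ, (C n ∩ B).Finite) ∧
        (∀ A ∈ 𝒜, ∃ n, (A \ C n).Finite) :=
  not_countably_generated_of_perfect_Lusin_gap_general 𝒜 ℬ a b hmemA hmemB hdisj hcross
end

section
/- Let D be a regular dyadic subtree of the Cantor tree 2^{<ω}. Every infinite antichain of D has a subsequence which is either an increasing antichain of D or a decreasing antichain of D. -/
/-- The meet `s ∧ t`: longest common initial segment of two nodes. -/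
def meet : List Bool → List Bool → List Bool
  | a :: s, b :: t => if a = b then a :: meet s t else []
  | _, _ => []

/-- For incomparable `s, t`: `s ≺ t` iff `(s∧t)⌢0 ⊑ s` and `(s∧t)⌢1 ⊑ t`. -/
def Prec (s t : List Bool) : Prop :=
  (meet s t ++ [false]) <+: s ∧ (meet s t ++ [true]) <+: t

/-- `e` is the canonical representation `t ↦ s_t` of a dyadic subtree: it preserves and
reflects the extension order `⊑` and the relation `≺`. -/
def DyadicSubtree (e : List Bool → List Bool) : Prop :=
  ∀ t₀ t₁ : List Bool, (t₀ <+: t₁ ↔ e t₀ <+: e t₁) ∧ (Prec t₀ t₁ ↔ Prec (e t₀) (e t₁))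

/-- A dyadic subtree is regular if `|t₀| = |t₁| ↔ |s_{t₀}| = |s_{t₁}|`. -/
def RegularDyadic (e : List Bool → List Bool) : Prop :=
  ∀ t₀ t₁ : List Bool, t₀.length = t₁.length ↔ (e t₀).length = (e t₁).length

/-! Following the `u n` down the tree, König's lemma gives a branch every initial segment of which
is extended by infinitely many `u n`. In an antichain each `u n` leaves this branch at some level,
and one can pick a subsequence in which every term extends the branch beyond the whole of the
previous term. Then any two terms meet where the earlier one leaves the branch, so two terms meet
above every term preceding them, and the earlier term lies to the left of all later ones exactly
when the branch turns right there. Infinitely many terms turn the same way; they form the required subsequence. -/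

open Function

theorem meet_append : ∀ a s t : List Bool, meet (a ++ s) (a ++ t) = a ++ meet s t
  | [], _, _ => rfl
  | _ :: a, s, t => by simp [meet, meet_append a s t]

theorem meet_append_cons_of_ne {b c : Bool} (h : b ≠ c) (a s t : List Bool) :
    meet (a ++ b :: s) (a ++ c :: t) = a := by
  rw [meet_append, meet, if_neg h, List.append_nil]

theorem prec_append_false_true (a s t : List Bool) : Prec (a ++ false :: s) (a ++ true :: t) := by
  rw [Prec, meet_append_cons_of_ne Bool.false_ne_true]
  exact ⟨⟨s, by simp⟩, ⟨t, by simp⟩⟩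

theorem DyadicSubtree.incomp_iff {e : List Bool → List Bool} (hdy : DyadicSubtree e)
    (s t : List Bool) : Incomp (e s) (e t) ↔ Incomp s t := by
  simp only [Incomp, (hdy s t).1, (hdy t s).1]

theorem exists_strictMono_forall_eq {β : Type*} [Finite β] (c : ℕ → β) :
    ∃ b, ∃ ψ : ℕ → ℕ, StrictMono ψ ∧ ∀ n, c (ψ n) = b := by
  obtain ⟨b, hb⟩ := Finite.exists_infinite_fiber c
  obtain ⟨ψ, hψ, hψb⟩ := Filter.extraction_of_frequently_atTop
    (Nat.frequently_atTop_iff_infinite.mpr (Set.infinite_coe_iff.mp hb))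
  exact ⟨b, ψ, hψ, hψb⟩

section Branch

variable (u : ℕ → List Bool)

open Classical in
noncomputable def heavyBit (p : List Bool) : Bool :=
  decide {n | p ++ [true] <+: u n}.Infinite

noncomputable def branch : ℕ → List Bool
  | 0 => []
  | k + 1 => branch k ++ [heavyBit u (branch k)]

theorem length_branch : ∀ k, (branch u k).length = k
  | 0 => rfl
  | k + 1 => by simp [branch, length_branch k]

theorem branch_prefix_branch {k m : ℕ} (h : k ≤ m) : branch u k <+: branch u m := by
  induction h with
  | refl => exact List.prefix_refl _
  | step _ ih => exact ih.trans (List.prefix_append _ _)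

theorem infinite_extending_heavyBit (hinj : Injective u) {p : List Bool}
    (hp : {n | p <+: u n}.Infinite) : {n | p ++ [heavyBit u p] <+: u n}.Infinite := by
  cases hb : heavyBit u p
  · have hcover : {n | p <+: u n} ⊆
        u ⁻¹' {p} ∪ {n | p ++ [true] <+: u n} ∪ {n | p ++ [false] <+: u n} := by
      rintro n ⟨_ | ⟨_ | _, r⟩, hr⟩
      · exact Or.inl (Or.inl (by simpa using hr.symm))
      · exact Or.inr ⟨r, by simpa using hr⟩
      · exact Or.inl (Or.inr ⟨r, by simpa using hr⟩)
    have hfiber : (u ⁻¹' {p}).Finite := (Set.finite_singleton p).preimage hinj.injOn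
    have htrue : ¬ {n | p ++ [true] <+: u n}.Infinite := by simpa [heavyBit] using hb
    simpa [Set.infinite_union, hfiber.not_infinite, htrue] using hp.mono hcover
  · simpa [heavyBit] using hb

theorem infinite_extending_branch (hinj : Injective u) (k : ℕ) :
    {n | branch u k <+: u n}.Infinite := by
  induction k with
  | zero => simpa [branch] using Set.infinite_univ
  | succ k ih => exact infinite_extending_heavyBit u hinj ih

noncomputable def splitLevel (n : ℕ) : ℕ :=
  Nat.findGreatest (fun k => branch u k <+: u n) (u n).length

theorem branch_splitLevel_prefix (n : ℕ) : branch u (splitLevel u n) <+: u n :=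
  Nat.findGreatest_spec (P := fun k => branch u k <+: u n) (Nat.zero_le _) List.nil_prefix

theorem le_splitLevel {k n : ℕ} (h : branch u k <+: u n) : k ≤ splitLevel u n :=
  Nat.le_findGreatest (by simpa [length_branch] using h.length_le) h

variable {u}

theorem not_prefix_branch (hinj : Injective u) (hu : Pairwise fun i j => Incomp (u i) (u j))
    (n k : ℕ) : ¬ u n <+: branch u k := by
  intro h
  obtain ⟨m, hm, hmn⟩ := ((infinite_extending_branch u hinj k).sdiff (Set.finite_singleton n)).nonempty
  exact (hu (Ne.symm hmn)).1 (h.trans hm)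

theorem splitLevel_lt_length (hinj : Injective u) (hu : Pairwise fun i j => Incomp (u i) (u j))
    (n : ℕ) : splitLevel u n < (u n).length := by
  have hle : splitLevel u n ≤ (u n).length := Nat.findGreatest_le _
  refine hle.lt_of_ne fun h => not_prefix_branch hinj hu n (u n).length ?_
  have hpre := branch_splitLevel_prefix u n
  rw [h] at hpre
  rw [hpre.eq_of_length (length_branch u _)]

variable (u) in
noncomputable def splitTurn (n : ℕ) : Bool := heavyBit u (branch u (splitLevel u n))

theorem exists_eq_branch_append_not_splitTurn (hinj : Injective u)
    (hu : Pairwise fun i j => Incomp (u i) (u j)) (n : ℕ) :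
    ∃ r, u n = branch u (splitLevel u n) ++ (!splitTurn u n) :: r := by
  obtain ⟨_ | ⟨b, r⟩, hr⟩ := branch_splitLevel_prefix u n
  · have hlt := splitLevel_lt_length hinj hu n
    simp [← hr, length_branch] at hlt
  · have hb : b ≠ splitTurn u n := by
      rintro rfl
      have hsucc : branch u (splitLevel u n + 1) <+: u n := ⟨r, by simpa [branch, splitTurn] using hr⟩
      exact (le_splitLevel u hsucc).not_gt (Nat.lt_succ_self _)
    exact ⟨r, by rw [← hr, Bool.eq_not_of_ne hb]⟩

theorem exists_eq_branch_append_of_prefix (hinj : Injective u)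
    (hu : Pairwise fun i j => Incomp (u i) (u j)) {n m : ℕ} (h : branch u (u n).length <+: u m) :
    ∃ r r', u n = branch u (splitLevel u n) ++ (!splitTurn u n) :: r ∧
      u m = branch u (splitLevel u n) ++ splitTurn u n :: r' := by
  obtain ⟨r, hr⟩ := exists_eq_branch_append_not_splitTurn hinj hu n
  obtain ⟨r', hr'⟩ := (branch_prefix_branch u (splitLevel_lt_length hinj hu n)).trans h
  exact ⟨r, r', hr, by simpa [branch, splitTurn] using hr'.symm⟩

theorem meet_eq_branch_splitLevel (hinj : Injective u)
    (hu : Pairwise fun i j => Incomp (u i) (u j)) {n m : ℕ} (h : branch u (u n).length <+: u m) :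
    meet (u n) (u m) = branch u (splitLevel u n) := by
  obtain ⟨r, r', hr, hr'⟩ := exists_eq_branch_append_of_prefix hinj hu h
  rw [hr, hr', meet_append_cons_of_ne (Bool.not_ne_self _)]

theorem prec_of_splitTurn_true (hinj : Injective u)
    (hu : Pairwise fun i j => Incomp (u i) (u j)) {n m : ℕ} (h : branch u (u n).length <+: u m)
    (ht : splitTurn u n = true) : Prec (u n) (u m) := by
  obtain ⟨r, r', hr, hr'⟩ := exists_eq_branch_append_of_prefix hinj hu h
  rw [hr, hr', ht]
  exact prec_append_false_true _ r r'

theorem prec_of_splitTurn_false (hinj : Injective u)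
    (hu : Pairwise fun i j => Incomp (u i) (u j)) {n m : ℕ} (h : branch u (u n).length <+: u m)
    (ht : splitTurn u n = false) : Prec (u m) (u n) := by
  obtain ⟨r, r', hr, hr'⟩ := exists_eq_branch_append_of_prefix hinj hu h
  rw [hr, hr', ht]
  exact prec_append_false_true _ r' r

noncomputable def combSeq (hinj : Injective u) : ℕ → ℕ
  | 0 => 0
  | n + 1 => ((infinite_extending_branch u hinj (u (combSeq hinj n)).length).exists_gt
      (combSeq hinj n)).choose

variable (hinj : Injective u)

theorem combSeq_succ_spec (n : ℕ) :
    branch u (u (combSeq hinj n)).length <+: u (combSeq hinj (n + 1)) ∧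
      combSeq hinj n < combSeq hinj (n + 1) :=
  ((infinite_extending_branch u hinj (u (combSeq hinj n)).length).exists_gt
      (combSeq hinj n)).choose_spec

theorem combSeq_strictMono : StrictMono (combSeq hinj) :=
  strictMono_nat_of_lt_succ fun n => (combSeq_succ_spec hinj n).2

variable (hu : Pairwise fun i j => Incomp (u i) (u j))
include hu

theorem length_combSeq_strictMono : StrictMono fun n => (u (combSeq hinj n)).length :=
  strictMono_nat_of_lt_succ fun n =>
    (le_splitLevel u (combSeq_succ_spec hinj n).1).trans_lt (splitLevel_lt_length hinj hu _)

theorem branch_prefix_combSeq {n m : ℕ} (h : n < m) :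
    branch u (u (combSeq hinj n)).length <+: u (combSeq hinj m) := by
  obtain ⟨k, rfl⟩ := Nat.exists_eq_add_of_lt h
  exact (branch_prefix_branch u ((length_combSeq_strictMono hinj hu).monotone
    (Nat.le_add_right n k))).trans (combSeq_succ_spec hinj (n + k)).1

theorem length_combSeq_le_length_meet {n m l : ℕ} (hnm : n < m) (hml : m < l) :
    (u (combSeq hinj n)).length ≤ (meet (u (combSeq hinj m)) (u (combSeq hinj l))).length := by
  rw [meet_eq_branch_splitLevel hinj hu (branch_prefix_combSeq hinj hu hml), length_branch]
  exact le_splitLevel u (branch_prefix_combSeq hinj hu hnm)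

end Branch

theorem antichain_has_increasing_or_decreasing_subsequence_general
    (e : List Bool → List Bool) (hdy : DyadicSubtree e)
    (u : ℕ → List Bool) (hinj : Function.Injective u)
    (hanti : Pairwise fun i j => Incomp (e (u i)) (e (u j))) :
    ∃ φ : ℕ → ℕ, StrictMono φ ∧
      (((∀ n m, n < m → (u (φ n)).length < (u (φ m)).length) ∧
        (∀ n m l, n < m → m < l →
          (u (φ n)).length ≤ (meet (u (φ m)) (u (φ l))).length) ∧
        (∀ n m, n < m → Prec (e (u (φ n))) (e (u (φ m))))) ∨
       ((∀ n m, n < m → (u (φ n)).length < (u (φ m)).length) ∧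
        (∀ n m l, n < m → m < l →
          (u (φ n)).length ≤ (meet (u (φ m)) (u (φ l))).length) ∧
        (∀ n m, n < m → Prec (e (u (φ m))) (e (u (φ n)))))) := by
  have hu : Pairwise fun i j => Incomp (u i) (u j) := fun i j hij =>
    (hdy.incomp_iff _ _).mp (hanti hij)
  obtain ⟨b, ψ, hψ, hturn⟩ := exists_strictMono_forall_eq (splitTurn u ∘ combSeq hinj)
  have hlen : ∀ n m, n < m → (u (combSeq hinj (ψ n))).length < (u (combSeq hinj (ψ m))).length :=
    fun n m h => length_combSeq_strictMono hinj hu (hψ h)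
  have hlevel : ∀ n m l, n < m → m < l → (u (combSeq hinj (ψ n))).length ≤
      (meet (u (combSeq hinj (ψ m))) (u (combSeq hinj (ψ l)))).length :=
    fun n m l hnm hml => length_combSeq_le_length_meet hinj hu (hψ hnm) (hψ hml)
  have hprefix : ∀ n m, n < m →
      branch u (u (combSeq hinj (ψ n))).length <+: u (combSeq hinj (ψ m)) :=
    fun n m h => branch_prefix_combSeq hinj hu (hψ h)
  refine ⟨combSeq hinj ∘ ψ, (combSeq_strictMono hinj).comp hψ, ?_⟩
  cases b
  · exact Or.inr ⟨hlen, hlevel, fun n m h =>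
      (hdy _ _).2.mp (prec_of_splitTurn_false hinj hu (hprefix n m h) (hturn n))⟩
  · exact Or.inl ⟨hlen, hlevel, fun n m h =>
      (hdy _ _).2.mp (prec_of_splitTurn_true hinj hu (hprefix n m h) (hturn n))⟩

/-- Every infinite antichain `(e(u n))` of a regular dyadic subtree `D` (with canonical
representation `e`, so that `|e t|_D = |t|` and `e t ∧_D e t' = e (t ∧ t')`) has a
subsequence which is an increasing or a decreasing antichain of `D`. -/
theorem antichain_has_increasing_or_decreasing_subsequence
    (e : List Bool → List Bool) (hdy : DyadicSubtree e) (hreg : RegularDyadic e)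
    (u : ℕ → List Bool) (hinj : Function.Injective u)
    (hanti : Pairwise fun i j => Incomp (e (u i)) (e (u j))) :
    ∃ φ : ℕ → ℕ, StrictMono φ ∧
      (((∀ n m, n < m → (u (φ n)).length < (u (φ m)).length) ∧
        (∀ n m l, n < m → m < l →
          (u (φ n)).length ≤ (meet (u (φ m)) (u (φ l))).length) ∧
        (∀ n m, n < m → Prec (e (u (φ n))) (e (u (φ m))))) ∨
       ((∀ n m, n < m → (u (φ n)).length < (u (φ m)).length) ∧
        (∀ n m l, n < m → m < l →
          (u (φ n)).length ≤ (meet (u (φ m)) (u (φ l))).length) ∧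
        (∀ n m, n < m → Prec (e (u (φ m))) (e (u (φ n)))))) :=
  antichain_has_increasing_or_decreasing_subsequence_general e hdy u hinj hanti
end

section
/- Every perfect downwards closed subtree R of 2^{<ω} contains a dyadic subtree D = {s_t : t ∈ 2^{<ω}} such that every s_t ends with the digit 1 and the lengths |s_t| are pairwise distinct for distinct t. -/
/-! Above every `s ∈ R` fix a node `split s ⊒ s` both of whose children lie in `R`. Enumerate `2^{<ω}`
breadth-first by `index t`, the number with binary digits `1t`, so that the parent of node `k`
is node `k / 2` and `k` is its left or right child according to the parity of `k`. The image of
node `k` is a node of `R` ending in `1`, extending `split (image of k / 2) ⌢ (k mod 2)`, and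
longer than the image of node `k - 1`. Lengths then strictly increase along the enumeration,
and since the two children of `t` lie on the two sides of the split above the image of `t`, the
map preserves `⊑` and `≺`; injectivity makes it reflect them as well. -/

lemma eq_of_append_singleton_prefix {α : Type*} {m u : List α} {a b : α}
    (ha : m ++ [a] <+: u) (hb : m ++ [b] <+: u) : a = b := by
  have h : m ++ [a] = m ++ [b] := (List.prefix_or_prefix_of_prefix ha hb).elim
    (·.eq_of_length (by simp)) (fun h => (h.eq_of_length (by simp)).symm)
  simpa using h

lemma meet_comm (s t : List Bool) : meet s t = meet t s := by
  induction s generalizing t with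
  | nil => cases t <;> rfl
  | cons a s ih =>
    cases t with
    | nil => rfl
    | cons b t => by_cases h : a = b <;> simp [meet, h, eq_comm, ih]

lemma prefix_meet {u s t : List Bool} (hs : u <+: s) (ht : u <+: t) : u <+: meet s t := by
  induction u generalizing s t with
  | nil => exact List.nil_prefix
  | cons a u ih =>
    obtain ⟨s, rfl⟩ := hs
    obtain ⟨t, rfl⟩ := ht
    simpa [meet] using ih (List.prefix_append u s) (List.prefix_append u t)

lemma prec_cons {a : Bool} {s t : List Bool} (h : Prec s t) : Prec (a :: s) (a :: t) := by
  simpa [Prec, meet] using h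

lemma prec_of_split {m s t : List Bool} (hs : m ++ [false] <+: s) (ht : m ++ [true] <+: t) :
    Prec s t := by
  induction m generalizing s t with
  | nil =>
    obtain ⟨s, rfl⟩ := hs
    obtain ⟨t, rfl⟩ := ht
    simp [Prec, meet]
  | cons a m ih =>
    obtain ⟨s, rfl⟩ := hs
    obtain ⟨t, rfl⟩ := ht
    simpa using prec_cons (a := a) (ih (List.prefix_append _ s) (List.prefix_append _ t))

lemma Prec.incomp {s t : List Bool} (h : Prec s t) : Incomp s t :=
  ⟨fun hst => by simpa using eq_of_append_singleton_prefix (h.1.trans hst) h.2,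
    fun hts => by simpa using eq_of_append_singleton_prefix h.1 (h.2.trans hts)⟩

lemma Prec.asymm {s t : List Bool} (h : Prec s t) : ¬ Prec t s := fun h' =>
  Bool.false_ne_true (eq_of_append_singleton_prefix h.1 (meet_comm t s ▸ h'.2))

lemma prefix_or_prefix_or_prec_or_prec (s t : List Bool) :
    s <+: t ∨ t <+: s ∨ Prec s t ∨ Prec t s := by
  induction s generalizing t with
  | nil => exact Or.inl List.nil_prefix
  | cons a s ih =>
    cases t with
    | nil => exact Or.inr (Or.inl List.nil_prefix)
    | cons b t =>
      by_cases hab : a = b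
      · subst hab
        simp only [List.cons_prefix_cons, true_and]
        exact (ih t).imp_right (Or.imp_right (Or.imp prec_cons prec_cons))
      · cases a <;> cases b <;> simp_all [Prec, meet]

lemma exists_split_of_incomp {s t : List Bool} (h : Incomp s t) :
    ∃ b, meet s t ++ [b] <+: s ∧ meet s t ++ [!b] <+: t := by
  rcases prefix_or_prefix_or_prec_or_prec s t with h' | h' | h' | h'
  · exact absurd h' h.1
  · exact absurd h' h.2
  · exact ⟨false, h'⟩
  · exact ⟨true, by simpa [Prec, meet_comm t s, and_comm] using h'⟩

section SplitMap

variable {e σ : List Bool → List Bool}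

lemma prefix_map_of_split (he : ∀ t, e t <+: σ t) (hσ : ∀ t b, σ t ++ [b] <+: e (t ++ [b]))
    {t₀ t₁ : List Bool} (h : t₀ <+: t₁) : e t₀ <+: e t₁ := by
  obtain ⟨u, rfl⟩ := h
  induction u using List.reverseRecOn with
  | nil => simp
  | append_singleton u b ih =>
    rw [← List.append_assoc]
    exact ih.trans ((he _).trans ((List.prefix_append _ _).trans (hσ _ b)))

lemma prec_map_of_split (he : ∀ t, e t <+: σ t) (hσ : ∀ t b, σ t ++ [b] <+: e (t ++ [b]))
    {t₀ t₁ : List Bool} (h : Prec t₀ t₁) : Prec (e t₀) (e t₁) :=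
  prec_of_split ((hσ _ false).trans (prefix_map_of_split he hσ h.1))
    ((hσ _ true).trans (prefix_map_of_split he hσ h.2))

theorem dyadicSubtree_of_split (he : ∀ t, e t <+: σ t)
    (hσ : ∀ t b, σ t ++ [b] <+: e (t ++ [b])) (hinj : Function.Injective e) :
    DyadicSubtree e := by
  intro t₀ t₁
  have mono {t₀ t₁} : t₀ <+: t₁ → e t₀ <+: e t₁ := prefix_map_of_split he hσ
  have prec {t₀ t₁} : Prec t₀ t₁ → Prec (e t₀) (e t₁) := prec_map_of_split he hσ
  refine ⟨⟨mono, fun h => ?_⟩, ⟨prec, fun h => ?_⟩⟩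
  · rcases prefix_or_prefix_or_prec_or_prec t₀ t₁ with h' | h' | h' | h'
    · exact h'
    · rw [hinj (h.eq_of_length (h.length_le.antisymm (mono h').length_le))]
    · exact absurd h (prec h').incomp.1
    · exact absurd h (prec h').incomp.2
  · rcases prefix_or_prefix_or_prec_or_prec t₀ t₁ with h' | h' | h' | h'
    · exact absurd (mono h') h.incomp.1
    · exact absurd (mono h') h.incomp.2
    · exact h'
    · exact absurd (prec h') h.asymm

end SplitMap

section Perfect

variable {R : Set (List Bool)}

lemma exists_split_above (hdc : ∀ t ∈ R, ∀ s : List Bool, s <+: t → s ∈ R)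
    (hperf : ∀ t ∈ R, ∃ s₁ ∈ R, ∃ s₂ ∈ R, t <+: s₁ ∧ t <+: s₂ ∧ Incomp s₁ s₂)
    {s : List Bool} (hs : s ∈ R) : ∃ u, s <+: u ∧ ∀ b, u ++ [b] ∈ R := by
  obtain ⟨s₁, h₁, s₂, h₂, hs₁, hs₂, hinc⟩ := hperf s hs
  obtain ⟨c, hc₁, hc₂⟩ := exists_split_of_incomp hinc
  refine ⟨meet s₁ s₂, prefix_meet hs₁ hs₂, fun b => ?_⟩
  obtain rfl | rfl : b = c ∨ b = !c := by cases b <;> cases c <;> simp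
  · exact hdc s₁ h₁ _ hc₁
  · exact hdc s₂ h₂ _ hc₂

structure Splitter (R : Set (List Bool)) where
  split : List Bool → List Bool
  nil_mem : [] ∈ R
  prefix_split : ∀ s ∈ R, s <+: split s
  split_append_mem : ∀ s ∈ R, ∀ b, split s ++ [b] ∈ R

lemma nonempty_splitter (hne : R.Nonempty) (hdc : ∀ t ∈ R, ∀ s : List Bool, s <+: t → s ∈ R)
    (hperf : ∀ t ∈ R, ∃ s₁ ∈ R, ∃ s₂ ∈ R, t <+: s₁ ∧ t <+: s₂ ∧ Incomp s₁ s₂) :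
    Nonempty (Splitter R) := by
  choose! σ hσ using fun s (hs : s ∈ R) => exists_split_above hdc hperf hs
  obtain ⟨t, ht⟩ := hne
  exact ⟨σ, hdc t ht [] List.nil_prefix, fun s hs => (hσ s hs).1, fun s hs => (hσ s hs).2⟩

end Perfect

def index (t : List Bool) : ℕ := t.foldl (fun n b => Nat.bit b n) 1

lemma index_append_singleton (t : List Bool) (b : Bool) :
    index (t ++ [b]) = Nat.bit b (index t) := by
  simp [index]

lemma index_ne_zero (t : List Bool) : index t ≠ 0 := by
  induction t using List.reverseRecOn with
  | nil => simp [index]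
  | append_singleton t b ih => simpa [index_append_singleton] using Nat.bit_ne_zero b ih

lemma index_injective : Function.Injective index := by
  have div2_index (t : List Bool) (b : Bool) : (index (t ++ [b])).div2 = index t := by
    rw [index_append_singleton, Nat.div2_bit]
  have bodd_index (t : List Bool) (b : Bool) : (index (t ++ [b])).bodd = b := by
    rw [index_append_singleton, Nat.bodd_bit]
  have index_nil_ne (t : List Bool) (b : Bool) : index [] ≠ index (t ++ [b]) := fun h =>
    index_ne_zero t (by rw [← div2_index t b, ← h]; rfl)
  intro s t h
  induction s using List.reverseRecOn generalizing t with
  | nil =>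
    cases t using List.reverseRecOn with
    | nil => rfl
    | append_singleton t b _ => exact absurd h (index_nil_ne t b)
  | append_singleton s a ih =>
    cases t using List.reverseRecOn with
    | nil => exact absurd h.symm (index_nil_ne s a)
    | append_singleton t b _ =>
      rw [ih (by simpa only [div2_index] using congrArg Nat.div2 h),
        show a = b by simpa only [bodd_index] using congrArg Nat.bodd h]

namespace Splitter

variable {R : Set (List Bool)} (S : Splitter R)

def climb (s : List Bool) : ℕ → List Bool
  | 0 => S.split s ++ [true]
  | n + 1 => S.split (climb s n) ++ [true]

lemma climb_mem {s : List Bool} (hs : s ∈ R) (n : ℕ) : S.climb s n ∈ R := by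
  induction n with
  | zero => exact S.split_append_mem s hs true
  | succ n ih => exact S.split_append_mem _ ih true

lemma prefix_climb {s : List Bool} (hs : s ∈ R) (n : ℕ) : s <+: S.climb s n := by
  induction n with
  | zero => exact (S.prefix_split s hs).trans (List.prefix_append _ _)
  | succ n ih =>
    exact ih.trans ((S.prefix_split _ (S.climb_mem hs n)).trans (List.prefix_append _ _))

lemma lt_length_climb {s : List Bool} (hs : s ∈ R) (n : ℕ) : n < (S.climb s n).length := by
  induction n with
  | zero => simp [climb]
  | succ n ih =>
    have := (S.prefix_split _ (S.climb_mem hs n)).length_le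
    simp only [climb, List.length_append, List.length_singleton]
    omega

lemma climb_endsWith_true (s : List Bool) (n : ℕ) : ∃ w, S.climb s n = w ++ [true] := by
  cases n <;> exact ⟨_, rfl⟩

def node : ℕ → List Bool
  | 0 => []
  | k + 1 => S.climb (S.split (node (k + 1).div2) ++ [(k + 1).bodd]) (node k).length
decreasing_by
  · rw [Nat.div2_val]; omega
  · omega

lemma node_mem (k : ℕ) : S.node k ∈ R := by
  induction k using Nat.strong_induction_on with
  | _ k ih =>
    cases k with
    | zero => rw [node]; exact S.nil_mem
    | succ k =>
      rw [node]
      exact S.climb_mem (S.split_append_mem _ (ih _ (by simp only [Nat.div2_val]; omega)) _) _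

lemma strictMono_length_node : StrictMono fun k => (S.node k).length :=
  strictMono_nat_of_lt_succ fun k => by
    rw [node]
    exact S.lt_length_climb (S.split_append_mem _ (S.node_mem _) _) _

lemma node_endsWith_true {k : ℕ} (hk : k ≠ 0) : ∃ w, S.node k = w ++ [true] := by
  obtain ⟨k, rfl⟩ := Nat.exists_eq_add_one_of_ne_zero hk
  rw [node]
  exact S.climb_endsWith_true _ _

lemma split_append_prefix_node_bit (b : Bool) {n : ℕ} (hn : n ≠ 0) :
    S.split (S.node n) ++ [b] <+: S.node (Nat.bit b n) := by
  obtain ⟨k, hk⟩ := Nat.exists_eq_add_one_of_ne_zero (Nat.bit_ne_zero b hn)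
  rw [hk, node, ← hk, Nat.div2_bit, Nat.bodd_bit]
  exact S.prefix_climb (S.split_append_mem _ (S.node_mem n) b) _

def tree (t : List Bool) : List Bool := S.node (index t)

lemma length_tree_injective : Function.Injective fun t => (S.tree t).length :=
  S.strictMono_length_node.injective.comp index_injective

lemma tree_dyadicSubtree : DyadicSubtree S.tree := by
  refine dyadicSubtree_of_split (σ := S.split ∘ S.tree)
    (fun t => S.prefix_split _ (S.node_mem _)) (fun t b => ?_) ?_
  · simpa [tree, index_append_singleton] using S.split_append_prefix_node_bit b (index_ne_zero t)
  · exact S.length_tree_injective.of_comp (f := List.length)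

end Splitter

/-- Every perfect downwards closed subtree `R` of `2^{<ω}` contains a dyadic subtree
`D = {s_t : t ∈ 2^{<ω}}` all of whose nodes end with the digit `1` and whose nodes have
pairwise distinct lengths. -/
theorem perfect_subtree_contains_dyadic_subtree
    (R : Set (List Bool)) (hne : R.Nonempty)
    (hdc : ∀ t ∈ R, ∀ s : List Bool, s <+: t → s ∈ R)
    (hperf : ∀ t ∈ R, ∃ s₁ ∈ R, ∃ s₂ ∈ R, t <+: s₁ ∧ t <+: s₂ ∧ Incomp s₁ s₂) :
    ∃ e : List Bool → List Bool, DyadicSubtree e ∧ (∀ t, e t ∈ R) ∧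
      (∀ t, ∃ w : List Bool, e t = w ++ [true]) ∧
      (∀ t t' : List Bool, t ≠ t' → (e t).length ≠ (e t').length) := by
  obtain ⟨S⟩ := nonempty_splitter hne hdc hperf
  exact ⟨S.tree, S.tree_dyadicSubtree, fun t => S.node_mem _,
    fun t => S.node_endsWith_true (index_ne_zero t),
    fun _ _ => S.length_tree_injective.ne⟩
end

section
/- Let U be an uncountable subset of 2^ℕ, and suppose σ ↦ (A_σ, B_σ) assigns to each σ ∈ U a pair of disjoint infinite subsets of ℕ such that for σ ≠ τ in U, (A_σ ∩ B_τ) ∪ (A_τ ∩ B_σ) ≠ ∅. Let A, B ⊆ ℕ be disjoint sets such that A_σ ⊆* A and B_σ ⊆* B for every σ ∈ U. Then a contradiction follows; i.e., no such disjoint A, B can exist. -/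
/-!
Attach to each `σ ∈ U` its pair of finite defects `(A σ \ AA, B σ \ BB)`. There are only
countably many pairs of finite subsets of `ℕ`, so two distinct `σ, τ ∈ U` share their defects.
Then `A σ ∩ B τ = ∅`: a point of it outside `AA` lies in `A σ \ AA = A τ \ AA`, hence in
`A τ ∩ B τ`; a point outside `BB` lies in `B τ \ BB = B σ \ BB`, hence in `A σ ∩ B σ`; and no
point lies in `AA ∩ BB`. Symmetrically `A τ ∩ B σ = ∅`, contradicting the crossing of `σ, τ`.
-/

open Set

theorem Set.disjoint_of_diff_eq {α : Type*} {s₁ s₂ t₁ t₂ S T : Set α} (hST : Disjoint S T)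
    (h₁ : Disjoint s₁ t₁) (h₂ : Disjoint s₂ t₂) (hs : s₁ \ S = s₂ \ S) (ht : t₁ \ T = t₂ \ T) :
    Disjoint s₁ t₂ := by
  refine Set.disjoint_left.2 fun x hxs hxt => ?_
  by_cases hxS : x ∈ S
  · by_cases hxT : x ∈ T
    · exact Set.disjoint_left.1 hST hxS hxT
    · have hx : x ∈ t₁ \ T := ht ▸ ⟨hxt, hxT⟩
      exact Set.disjoint_left.1 h₁ hxs hx.1
  · have hx : x ∈ s₂ \ S := hs ▸ ⟨hxs, hxS⟩
    exact Set.disjoint_left.1 h₂ hx.1 hxt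

theorem Set.exists_ne_diff_eq_of_not_countable {ι α : Type*} [Countable α] {U : Set ι}
    (hU : ¬ U.Countable) {A B : ι → Set α} {S T : Set α}
    (hA : ∀ i ∈ U, (A i \ S).Finite) (hB : ∀ i ∈ U, (B i \ T).Finite) :
    ∃ i ∈ U, ∃ j ∈ U, i ≠ j ∧ A i \ S = A j \ S ∧ B i \ T = B j \ T := by
  have hmaps : MapsTo (fun i => (A i \ S, B i \ T)) U
      ({s : Set α | s.Finite} ×ˢ {s : Set α | s.Finite}) :=
    fun i hi => ⟨hA i hi, hB i hi⟩
  have hninj : ¬ InjOn (fun i => (A i \ S, B i \ T)) U := fun hinj =>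
    hU (hmaps.countable_of_injOn hinj (Countable.ofPred_finite.prod Countable.ofPred_finite))
  simp only [InjOn, Prod.mk.injEq, not_forall] at hninj
  obtain ⟨i, hi, j, hj, ⟨hAij, hBij⟩, hij⟩ := hninj
  exact ⟨i, hi, j, hj, hij, hAij, hBij⟩

theorem no_disjoint_almost_cover_of_crossing_family_general
    (U : Set (ℕ → Bool)) (hU : ¬ U.Countable)
    (A B : (ℕ → Bool) → Set ℕ)
    (hdisj : ∀ σ ∈ U, A σ ∩ B σ = ∅)
    (hcross : ∀ σ ∈ U, ∀ τ ∈ U, σ ≠ τ → ((A σ ∩ B τ) ∪ (A τ ∩ B σ)).Nonempty)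
    (AA BB : Set ℕ) (hAB : AA ∩ BB = ∅)
    (hA : ∀ σ ∈ U, (A σ \ AA).Finite) (hB : ∀ σ ∈ U, (B σ \ BB).Finite) :
    False := by
  obtain ⟨σ, hσ, τ, hτ, hστ, hAστ, hBστ⟩ := exists_ne_diff_eq_of_not_countable hU hA hB
  have hdisj' : ∀ ρ ∈ U, Disjoint (A ρ) (B ρ) := fun ρ hρ =>
    disjoint_iff_inter_eq_empty.2 (hdisj ρ hρ)
  have hAB' : Disjoint AA BB := disjoint_iff_inter_eq_empty.2 hAB
  have hστ_disj : Disjoint (A σ) (B τ) :=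
    disjoint_of_diff_eq hAB' (hdisj' σ hσ) (hdisj' τ hτ) hAστ hBστ
  have hτσ_disj : Disjoint (A τ) (B σ) :=
    disjoint_of_diff_eq hAB' (hdisj' τ hτ) (hdisj' σ hσ) hAστ.symm hBστ.symm
  have hcross_empty : (A σ ∩ B τ) ∪ (A τ ∩ B σ) = ∅ := by
    rw [hστ_disj.inter_eq, hτσ_disj.inter_eq, union_empty]
  exact (hcross σ hσ τ hτ hστ).ne_empty hcross_empty

/-- The combinatorial core of Lemma 3.9: an uncountable family of pairwise "crossing"
disjoint pairs `(A_σ, B_σ)` of infinite subsets of `ℕ` cannot be almost contained in a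
single disjoint pair `(A, B)`. -/
theorem no_disjoint_almost_cover_of_crossing_family
    (U : Set (ℕ → Bool)) (hU : ¬ U.Countable)
    (A B : (ℕ → Bool) → Set ℕ)
    (hAinf : ∀ σ ∈ U, (A σ).Infinite) (hBinf : ∀ σ ∈ U, (B σ).Infinite)
    (hdisj : ∀ σ ∈ U, A σ ∩ B σ = ∅)
    (hcross : ∀ σ ∈ U, ∀ τ ∈ U, σ ≠ τ → ((A σ ∩ B τ) ∪ (A τ ∩ B σ)).Nonempty)
    (AA BB : Set ℕ) (hAB : AA ∩ BB = ∅)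
    (hA : ∀ σ ∈ U, (A σ \ AA).Finite) (hB : ∀ σ ∈ U, (B σ \ BB).Finite) :
    False :=
  no_disjoint_almost_cover_of_crossing_family_general U hU A B hdisj hcross AA BB hAB hA hB
end
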